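/- If X̃₁ and X̃₂ are strong fuzzy incidence graphs, then their tensor product X̃ = X̃₁ ⋄ X̃₂ is a strong fuzzy incidence graph. -/

import Mathlib

open scoped BigOperators

/-- A fuzzy incidence graph on a finite vertex type `V`.  An (undirected, loopless) edge `xy`
is encoded by the symmetric membership function `rho`, and the incidence pair `(x, xy)`
is encoded by `eta x y` (so `eta x y` is the membership value of the pair consisting of the
vertex `x` and the edge joining `x` and `y`). All membership values lie in `[0,1]`,
`rho xy ≤ min (eps x) (eps y)` and `eta (x, xy) ≤ min (eps x) (rho xy)`. -/
structure FIG (V : Type) [Fintype V] [DecidableEq V] where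
  eps : V → ℝ
  rho : V → V → ℝ
  eta : V → V → ℝ
  eps_nonneg : ∀ x, 0 ≤ eps x
  eps_le_one : ∀ x, eps x ≤ 1
  rho_nonneg : ∀ x y, 0 ≤ rho x y
  rho_symm : ∀ x y, rho x y = rho y x
  rho_le : ∀ x y, rho x y ≤ min (eps x) (eps y)
  rho_irrefl : ∀ x, rho x x = 0
  eta_nonneg : ∀ x y, 0 ≤ eta x y
  eta_le : ∀ x y, eta x y ≤ min (eps x) (rho x y)

namespace FIG

variable {V V₁ V₂ : Type} [Fintype V] [DecidableEq V]
  [Fintype V₁] [DecidableEq V₁] [Fintype V₂] [DecidableEq V₂]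

/-- `(x, xy)` is a pair of the fuzzy incidence graph (i.e. belongs to the support `η*`). -/
def IsPair (G : FIG V) (x y : V) : Prop := 0 < G.eta x y

/-- the minimum of the two pair weights along one edge step of an incidence path -/
def pairMin (G : FIG V) (a b : V) : ℝ := min (G.eta a b) (G.eta b a)

/-- the minimum of the pair weights along the internal steps of a vertex list -/
def chainStrength (G : FIG V) : List V → ℝ
  | [] => 1
  | [_] => 1
  | a :: b :: l => min (G.pairMin a b) (G.chainStrength (b :: l))

/-- The set of incidence strengths of incidence paths from the vertex `x` to the edge `yz`:
a path is recorded by its (pairwise distinct) sequence of vertices, starting at `x` and ending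
at an endpoint of the edge `yz`; its strength is the minimum of the weights of its pairs
(pairs of weight `0` are not genuine pairs, but a list using them has strength `0`, so
including such lists does not alter the supremum below). -/
def pathStrengths (G : FIG V) (x y z : V) : Set ℝ :=
  {s | ∃ l : List V, l.Nodup ∧ l.head? = some x ∧
      ((l.getLast? = some y ∧ s = min (G.chainStrength l) (G.eta y z)) ∨
       (l.getLast? = some z ∧ s = min (G.chainStrength l) (G.eta z y)))}

/-- `ICONN G x y z` is the greatest incidence strength of an incidence path from the
vertex `x` to the edge `yz` (the incidence connectivity `ICONN_G (x, yz)`). -/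
noncomputable def ICONN (G : FIG V) (x y z : V) : ℝ := sSup (G.pathStrengths x y z)

/-- the fuzzy incidence graph obtained by deleting the pair `(a, ab)` -/
def deletePair (G : FIG V) (a b : V) : FIG V where
  eps := G.eps
  rho := G.rho
  eta := fun u v => if u = a ∧ v = b then 0 else G.eta u v
  eps_nonneg := G.eps_nonneg
  eps_le_one := G.eps_le_one
  rho_nonneg := G.rho_nonneg
  rho_symm := G.rho_symm
  rho_le := G.rho_le
  rho_irrefl := G.rho_irrefl
  eta_nonneg := by
    intro u v; (try dsimp only); split
    · exact le_refl 0
    · exact G.eta_nonneg u v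
  eta_le := by
    intro u v; (try dsimp only); split
    · exact le_min (G.eps_nonneg u) (G.rho_nonneg u v)
    · exact G.eta_le u v

/-- The pair `(x, xy)` is strong: its weight is at least the incidence connectivity
between `x` and the edge `xy` in the graph obtained by deleting the pair `(x, xy)`. -/
def IsStrongPair (G : FIG V) (x y : V) : Prop :=
  (G.deletePair x y).ICONN x x y ≤ G.eta x y

/-- a strong fuzzy incidence graph: every pair is strong -/
def Strong (G : FIG V) : Prop := ∀ x y, G.IsPair x y → G.IsStrongPair x y

/-- The pair `(x, xy)` is effective: `η(x, xy) = min (ε x) (ρ xy)`. -/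
def EffectivePair (G : FIG V) (x y : V) : Prop :=
  G.eta x y = min (G.eps x) (G.rho x y)

/-- a fuzzy incidence graph in which every pair is effective -/
def EffectivePairs (G : FIG V) : Prop := ∀ x y, G.IsPair x y → G.EffectivePair x y

/-- The tensor product of two fuzzy incidence graphs: `(a₁,b₁)(a₂,b₂)` is an edge when
`a₁a₂ ∈ E₁` and `b₁b₂ ∈ E₂`; a pair of the product exists when all four corresponding
pairs of the factors exist, with weight `min (η₁ (a₁,a₁a₂)) (η₂ (b₁,b₁b₂))`. -/
noncomputable def tensor (G₁ : FIG V₁) (G₂ : FIG V₂) : FIG (V₁ × V₂) where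
  eps := fun p => min (G₁.eps p.1) (G₂.eps p.2)
  rho := fun p q => min (G₁.rho p.1 q.1) (G₂.rho p.2 q.2)
  eta := fun p q =>
    if 0 < G₁.eta p.1 q.1 ∧ 0 < G₁.eta q.1 p.1 ∧ 0 < G₂.eta p.2 q.2 ∧ 0 < G₂.eta q.2 p.2
    then min (G₁.eta p.1 q.1) (G₂.eta p.2 q.2) else 0
  eps_nonneg := fun p => le_min (G₁.eps_nonneg p.1) (G₂.eps_nonneg p.2)
  eps_le_one := fun p => min_le_of_left_le (G₁.eps_le_one p.1)
  rho_nonneg := fun p q => le_min (G₁.rho_nonneg _ _) (G₂.rho_nonneg _ _)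
  rho_symm := fun p q => by
    (try dsimp only); rw [G₁.rho_symm p.1 q.1, G₂.rho_symm p.2 q.2]
  rho_le := by
    intro p q; (try dsimp only)
    refine le_min (le_min (min_le_of_left_le ?_) (min_le_of_right_le ?_))
      (le_min (min_le_of_left_le ?_) (min_le_of_right_le ?_))
    · exact le_trans (G₁.rho_le p.1 q.1) (min_le_left _ _)
    · exact le_trans (G₂.rho_le p.2 q.2) (min_le_left _ _)
    · exact le_trans (G₁.rho_le p.1 q.1) (min_le_right _ _)
    · exact le_trans (G₂.rho_le p.2 q.2) (min_le_right _ _)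
  rho_irrefl := by
    intro p; (try dsimp only)
    rw [G₁.rho_irrefl, G₂.rho_irrefl]
    exact min_self 0
  eta_nonneg := by
    intro p q; (try dsimp only); split
    · exact le_min (G₁.eta_nonneg _ _) (G₂.eta_nonneg _ _)
    · exact le_refl 0
  eta_le := by
    intro p q; (try dsimp only); split
    · refine le_min (le_min (min_le_of_left_le ?_) (min_le_of_right_le ?_))
        (le_min (min_le_of_left_le ?_) (min_le_of_right_le ?_))
      · exact le_trans (G₁.eta_le p.1 q.1) (min_le_left _ _)
      · exact le_trans (G₂.eta_le p.2 q.2) (min_le_left _ _)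
      · exact le_trans (G₁.eta_le p.1 q.1) (min_le_right _ _)
      · exact le_trans (G₂.eta_le p.2 q.2) (min_le_right _ _)
    · exact le_min (le_min (G₁.eps_nonneg _) (G₂.eps_nonneg _))
        (le_min (G₁.rho_nonneg _ _) (G₂.rho_nonneg _ _))

/-! A walk in the product projects onto walks in the two factors that are at least as strong.
In a strong factor, a walk from `x` to `y` closed off by the pair `(y, yx)` is no stronger than
`η (x, xy)`: either it uses the pair `(x, xy)`, whose weight then caps its strength, or it is a
walk in the graph with that pair deleted, and after removing its loops a path there, which the
strength of `(x, xy)` bounds by `η (x, xy)`. Hence the two projections bound every walk closing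
off the product pair by `min (η₁ (a₁, a₁a₂)) (η₂ (b₁, b₁b₂))`, the weight of that pair. -/

section Chains

variable (G : FIG V)

lemma chainStrength_le_one : ∀ l : List V, G.chainStrength l ≤ 1
  | [] | [_] => le_rfl
  | _ :: b :: l => min_le_of_right_le (chainStrength_le_one (b :: l))

lemma chainStrength_cons_le : ∀ (a : V) (l : List V), G.chainStrength (a :: l) ≤ G.chainStrength l
  | _, [] => le_rfl
  | _, _ :: _ => min_le_right _ _

lemma chainStrength_append_le : ∀ l₁ l₂ : List V,
    G.chainStrength (l₁ ++ l₂) ≤ G.chainStrength l₂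
  | [], _ => le_rfl
  | a :: l₁, l₂ => (G.chainStrength_cons_le a (l₁ ++ l₂)).trans (chainStrength_append_le l₁ l₂)

lemma exists_nodup_chainStrength_le : ∀ l : List V, ∃ l' : List V, l'.Nodup ∧
    l'.head? = l.head? ∧ l'.getLast? = l.getLast? ∧ G.chainStrength l ≤ G.chainStrength l'
  | [] => ⟨[], List.nodup_nil, rfl, rfl, le_rfl⟩
  | [a] => ⟨[a], List.nodup_singleton a, rfl, rfl, le_rfl⟩
  | a :: b :: t => by
    obtain ⟨l', hnodup, hhead, hlast, hle⟩ := exists_nodup_chainStrength_le (b :: t)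
    by_cases ha : a ∈ l'
    · obtain ⟨B, C, rfl⟩ := List.append_of_mem ha
      refine ⟨a :: C, hnodup.sublist (List.sublist_append_right _ _), rfl, ?_, ?_⟩
      · rw [List.getLast?_cons_cons, ← hlast,
          List.getLast?_append_of_ne_nil _ (List.cons_ne_nil a C)]
      · calc G.chainStrength (a :: b :: t) ≤ G.chainStrength (b :: t) :=
              G.chainStrength_cons_le a _
          _ ≤ G.chainStrength (B ++ a :: C) := hle
          _ ≤ G.chainStrength (a :: C) := G.chainStrength_append_le B _
    · obtain ⟨s, rfl⟩ := List.head?_eq_some_iff.1 hhead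
      exact ⟨a :: b :: s, List.nodup_cons.mpr ⟨ha, hnodup⟩, rfl,
        by rw [List.getLast?_cons_cons, hlast, List.getLast?_cons_cons],
        min_le_min le_rfl hle⟩

end Chains

lemma chainStrength_le_map {A B : Type} [Fintype A] [DecidableEq A] [Fintype B] [DecidableEq B]
    (G : FIG A) (H : FIG B) (f : A → B) (hf : ∀ u v, G.eta u v ≤ H.eta (f u) (f v)) :
    ∀ l : List A, G.chainStrength l ≤ H.chainStrength (l.map f)
  | [] | [_] => le_rfl
  | a :: b :: l =>
    min_le_min (min_le_min (hf a b) (hf b a)) (chainStrength_le_map G H f hf (b :: l))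

section DeletePair

variable (G : FIG V) (x y : V)

lemma deletePair_eta_self : (G.deletePair x y).eta x y = 0 := if_pos ⟨rfl, rfl⟩

lemma deletePair_eta_of_ne {u v : V} (h : ¬(u = x ∧ v = y)) :
    (G.deletePair x y).eta u v = G.eta u v := if_neg h

lemma deletePair_eta_le (u v : V) : (G.deletePair x y).eta u v ≤ G.eta u v := by
  by_cases h : u = x ∧ v = y
  · obtain ⟨rfl, rfl⟩ := h
    rw [deletePair_eta_self]
    exact G.eta_nonneg u v
  · rw [G.deletePair_eta_of_ne x y h]

lemma chainStrength_le_max_deletePair : ∀ l : List V,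
    G.chainStrength l ≤ max ((G.deletePair x y).chainStrength l) (G.eta x y)
  | [] | [_] => le_max_of_le_left le_rfl
  | a :: b :: l => by
    have heta : ∀ u v, G.eta u v ≤ max ((G.deletePair x y).eta u v) (G.eta x y) := by
      intro u v
      by_cases h : u = x ∧ v = y
      · obtain ⟨rfl, rfl⟩ := h
        exact le_max_right _ _
      · rw [G.deletePair_eta_of_ne x y h]
        exact le_max_left _ _
    simp only [chainStrength, pairMin, max_min_distrib_right]
    exact min_le_min (min_le_min (heta a b) (heta b a)) (chainStrength_le_max_deletePair (b :: l))

end DeletePair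

lemma bddAbove_pathStrengths (G : FIG V) (x y z : V) : BddAbove (G.pathStrengths x y z) :=
  ⟨1, by
    rintro s ⟨l, -, -, ⟨-, rfl⟩ | ⟨-, rfl⟩⟩ <;> exact min_le_of_left_le (G.chainStrength_le_one l)⟩

variable {G : FIG V} {x y : V}

lemma isStrongPair_iff : G.IsStrongPair x y ↔ ∀ l : List V, l.Nodup → l.head? = some x →
    l.getLast? = some y →
      min ((G.deletePair x y).chainStrength l) ((G.deletePair x y).eta y x) ≤ G.eta x y := by
  constructor
  · intro h l hnodup hhead hlast
    exact (le_csSup (bddAbove_pathStrengths _ x x y)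
      ⟨l, hnodup, hhead, Or.inr ⟨hlast, rfl⟩⟩).trans h
  · intro h
    refine Real.sSup_le ?_ (G.eta_nonneg x y)
    rintro s ⟨l, hnodup, hhead, ⟨-, rfl⟩ | ⟨hlast, rfl⟩⟩
    · rw [deletePair_eta_self]
      exact (min_le_right _ _).trans (G.eta_nonneg x y)
    · exact h l hnodup hhead hlast

lemma IsPair.ne (h : G.IsPair x y) : x ≠ y := by
  rintro rfl
  have := G.eta_le x x
  rw [G.rho_irrefl] at this
  exact (h.trans_le (this.trans (min_le_right _ _))).false

lemma IsStrongPair.min_chainStrength_le (h : G.IsStrongPair x y) (hne : x ≠ y) (l : List V)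
    (hhead : l.head? = some x) (hlast : l.getLast? = some y) :
    min (G.chainStrength l) (G.eta y x) ≤ G.eta x y := by
  obtain ⟨l', hnodup, hhead', hlast', hle⟩ :=
    (G.deletePair x y).exists_nodup_chainStrength_le l
  have hyx : (G.deletePair x y).eta y x = G.eta y x :=
    G.deletePair_eta_of_ne x y fun h => hne h.1.symm
  have hpath := isStrongPair_iff.1 h l' hnodup (hhead'.trans hhead) (hlast'.trans hlast)
  rw [hyx] at hpath
  calc min (G.chainStrength l) (G.eta y x)
      ≤ max (min ((G.deletePair x y).chainStrength l) (G.eta y x)) (G.eta x y) := by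
        rw [max_min_distrib_right]
        exact min_le_min (G.chainStrength_le_max_deletePair x y l) (le_max_left _ _)
    _ ≤ G.eta x y := max_le ((min_le_min hle le_rfl).trans hpath) le_rfl

lemma min_chainStrength_le_of_map {A : Type} [Fintype A] [DecidableEq A] (H : FIG A) (f : A → V)
    (hf : ∀ u v, H.eta u v ≤ G.eta (f u) (f v)) {p q : A} (h : G.IsStrongPair (f p) (f q))
    (hne : f p ≠ f q) (l : List A) (hhead : l.head? = some p) (hlast : l.getLast? = some q) :
    min (H.chainStrength l) (H.eta q p) ≤ G.eta (f p) (f q) :=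
  (min_le_min (chainStrength_le_map H G f hf l) (hf q p)).trans <|
    h.min_chainStrength_le hne _ (by rw [List.head?_map, hhead]; rfl)
      (by rw [List.getLast?_map, hlast]; rfl)

section Tensor

variable (G₁ : FIG V₁) (G₂ : FIG V₂) (p q : V₁ × V₂)

lemma tensor_eta : (G₁.tensor G₂).eta p q =
    if 0 < G₁.eta p.1 q.1 ∧ 0 < G₁.eta q.1 p.1 ∧ 0 < G₂.eta p.2 q.2 ∧ 0 < G₂.eta q.2 p.2
    then min (G₁.eta p.1 q.1) (G₂.eta p.2 q.2) else 0 := rfl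

lemma tensor_eta_le_fst : (G₁.tensor G₂).eta p q ≤ G₁.eta p.1 q.1 := by
  rw [tensor_eta]
  split
  · exact min_le_left _ _
  · exact G₁.eta_nonneg _ _

lemma tensor_eta_le_snd : (G₁.tensor G₂).eta p q ≤ G₂.eta p.2 q.2 := by
  rw [tensor_eta]
  split
  · exact min_le_right _ _
  · exact G₂.eta_nonneg _ _

variable {G₁ G₂ p q}

lemma IsPair.of_tensor (h : (G₁.tensor G₂).IsPair p q) :
    G₁.IsPair p.1 q.1 ∧ G₂.IsPair p.2 q.2 ∧
      (G₁.tensor G₂).eta p q = min (G₁.eta p.1 q.1) (G₂.eta p.2 q.2) := by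
  unfold IsPair at h ⊢
  rw [tensor_eta] at h ⊢
  split at h
  · next hpos => exact ⟨hpos.1, hpos.2.2.1, if_pos hpos⟩
  · exact absurd h (lt_irrefl 0)

end Tensor

/-- **Theorem 33.** The tensor product of two strong fuzzy incidence graphs is a strong
fuzzy incidence graph. -/
theorem tensor_strong (G₁ : FIG V₁) (G₂ : FIG V₂)
    (h₁ : G₁.Strong) (h₂ : G₂.Strong) : (G₁.tensor G₂).Strong := by
  intro p q hpq
  obtain ⟨hpair₁, hpair₂, heta⟩ := hpq.of_tensor
  rw [isStrongPair_iff, heta]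
  intro l _ hhead hlast
  exact le_min
    (min_chainStrength_le_of_map _ Prod.fst
      (fun u v => (deletePair_eta_le _ p q u v).trans (tensor_eta_le_fst G₁ G₂ u v))
      (h₁ _ _ hpair₁) hpair₁.ne l hhead hlast)
    (min_chainStrength_le_of_map _ Prod.snd
      (fun u v => (deletePair_eta_le _ p q u v).trans (tensor_eta_le_snd G₁ G₂ u v))
      (h₂ _ _ hpair₂) hpair₂.ne l hhead hlast)

end FIG
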